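/- arXiv:2012.03076 — 4 statements merged into one kernel-verified Lean document; each statement's English description precedes it below -/
import Mathlib

section
/- If L/K is a vast field extension and K'/K is a finite extension that is linearly disjoint from L over K, then the compositum LK' is a vast extension of K'. -/
open Module IntermediateField

theorem aux_fd_ext {K : Type*} [Field K] {E : Type*} [Field E] [Algebra K E]
    {A B : IntermediateField K E} (h : A ≤ B) [FiniteDimensional K ↥B] :
    FiniteDimensional ↥A ↥(extendScalars h) := by
  have h1 : Module.rank ↥A ↥(extendScalars h) = relrank A B := (relrank_eq_rank_of_le h).symm
  have h2 : relrank A B ≤ Module.rank K ↥B := by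
    rw [← rank_bot_mul_relrank h]
    exact Cardinal.le_mul_left (by exact_mod_cast (rank_pos (R := K) (M := ↥A)).ne')
  have h3 := h2.trans_lt (rank_lt_aleph0 K ↥B)
  rw [← h1] at h3
  exact IsNoetherian.iff_fg.1 (IsNoetherian.iff_rank_lt_aleph0.2 h3)

theorem aux_fd_of_ext {K : Type*} [Field K] {E : Type*} [Field E] [Algebra K E]
    {A B : IntermediateField K E} (h : A ≤ B) [FiniteDimensional K ↥A]
    (hfd : FiniteDimensional ↥A ↥(extendScalars h)) :
    FiniteDimensional K ↥B := by
  have h1 : Module.rank K ↥B = Module.rank K ↥A * relrank A B := (rank_bot_mul_relrank h).symm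
  rw [relrank_eq_rank_of_le h] at h1
  have h3 : Module.rank K ↥B < Cardinal.aleph0 := by
    rw [h1]; exact Cardinal.mul_lt_aleph0 (rank_lt_aleph0 _ _) (rank_lt_aleph0 _ _)
  exact IsNoetherian.iff_fg.1 (IsNoetherian.iff_rank_lt_aleph0.2 h3)

theorem aux_finrank_ext {K : Type*} [Field K] {E : Type*} [Field E] [Algebra K E]
    {A B : IntermediateField K E} (h : A ≤ B) :
    finrank K ↥A * finrank ↥A ↥(extendScalars h) = finrank K ↥B := by
  rw [← relfinrank_eq_finrank_of_le h]
  exact finrank_bot_mul_relfinrank h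

theorem aux_finrank_bot {K : Type*} [Field K] {E : Type*} [Field E] [Algebra K E]
    {X : IntermediateField K E} (h : (⊥ : IntermediateField K E) ≤ X) :
    finrank ↥(⊥ : IntermediateField K E) ↥(extendScalars h) = finrank K ↥X := by
  have := aux_finrank_ext h
  rwa [IntermediateField.finrank_bot, one_mul] at this



/-- An intermediate extension `K' ≤ L` (inside a fixed algebraic closure `Ω` of the
characteristic-zero base field `K`) is *vast* (over `K'`) if `L ≠ K'` and for every finite
extension `F/K'` inside `Ω` there is an intermediate field `M` with `K' ⊊ M ⊆ L` such that
`M` and `F` are linearly disjoint over `K'`. -/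
def IsVastOver {K : Type*} [Field K]
    (K' L : IntermediateField K (AlgebraicClosure K)) (_hKL : K' ≤ L) : Prop :=
  L ≠ K' ∧
    ∀ (F : IntermediateField K (AlgebraicClosure K)) (hF : K' ≤ F),
      FiniteDimensional ↥K' ↥(IntermediateField.extendScalars hF) →
        ∃ (M : IntermediateField K (AlgebraicClosure K)) (hM : K' ≤ M), M ≤ L ∧ M ≠ K' ∧
          (IntermediateField.extendScalars hM).LinearDisjoint
            ↥(IntermediateField.extendScalars hF)

/-- If `L/K` is vast and `K'/K` is a finite extension linearly disjoint from `L` over `K`,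
then the compositum `LK'` is a vast extension of `K'`. -/
theorem vast_base_change {K : Type*} [Field K] [CharZero K]
    (L K' : IntermediateField K (AlgebraicClosure K))
    (hvast : IsVastOver ⊥ L bot_le)
    (hfin : FiniteDimensional K ↥K')
    (hdisj : L.LinearDisjoint ↥K') :
    IsVastOver K' (L ⊔ K') le_sup_right := by
  obtain ⟨hLne, hV⟩ := hvast
  constructor
  · intro h
    have hLK : L ≤ K' := le_sup_left.trans h.le
    have : L ⊓ K' = ⊥ := hdisj.inf_eq_bot
    exact hLne (by rwa [inf_eq_left.2 hLK] at this)
  · intro F hF hFfd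
    haveI : FiniteDimensional K ↥F := aux_fd_of_ext hF hFfd
    haveI : FiniteDimensional ↥(⊥ : IntermediateField K (AlgebraicClosure K))
        ↥(extendScalars (bot_le : ⊥ ≤ F)) := aux_fd_ext _
    obtain ⟨N, _, hNL, hNne, hND⟩ := hV F bot_le this
    -- shrink N to a finite piece
    obtain ⟨x, hxN, hxbot⟩ : ∃ x ∈ N, x ∉ (⊥ : IntermediateField K (AlgebraicClosure K)) :=
      SetLike.exists_of_lt (lt_of_le_of_ne bot_le (Ne.symm hNne))
    set N₀ : IntermediateField K (AlgebraicClosure K) := K⟮x⟯ with hN₀def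
    have hxN₀ : x ∈ N₀ := mem_adjoin_simple_self K x
    have hN₀N : N₀ ≤ N := adjoin_simple_le_iff.2 hxN
    have hN₀ne : N₀ ≠ ⊥ := fun h => hxbot (h ▸ hxN₀)
    haveI : FiniteDimensional K ↥N₀ :=
      IntermediateField.adjoin.finiteDimensional
        (Algebra.IsAlgebraic.isAlgebraic (R := K) x).isIntegral
    -- linear disjointness of N₀ and F over ⊥
    have hND0 : (extendScalars (bot_le : ⊥ ≤ N₀)).LinearDisjoint
        ↥(extendScalars (bot_le : ⊥ ≤ F)) := hND.of_le_left hN₀N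
    -- convert to finrank over K
    haveI : FiniteDimensional ↥(⊥ : IntermediateField K (AlgebraicClosure K))
        ↥(extendScalars (bot_le : ⊥ ≤ N₀)) := aux_fd_ext _
    have hsup := hND0.finrank_sup (B := extendScalars (bot_le : ⊥ ≤ F))
    rw [extendScalars_sup] at hsup
    rw [aux_finrank_bot, aux_finrank_bot, aux_finrank_bot] at hsup
    -- hsup : finrank K ↥(N₀ ⊔ F) = finrank K ↥N₀ * finrank K ↥F
    haveI : FiniteDimensional K ↥(N₀ ⊔ F) := IntermediateField.finiteDimensional_sup N₀ F
    have hdKF : N₀.LinearDisjoint F :=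
      IntermediateField.LinearDisjoint.of_finrank_sup hsup
    have hdK' : N₀.LinearDisjoint K' := hdKF.of_le_right hF
    refine ⟨N₀ ⊔ K', le_sup_right, sup_le ((hN₀N.trans hNL).trans le_sup_left) le_sup_right,
      ?_, ?_⟩
    · intro h
      have hN₀K' : N₀ ≤ K' := le_sup_left.trans h.le
      have h2 : N₀ ⊓ F = ⊥ := hdKF.inf_eq_bot
      exact hN₀ne (by rwa [inf_eq_left.2 (hN₀K'.trans hF)] at h2)
    · haveI : FiniteDimensional K ↥(N₀ ⊔ K') := IntermediateField.finiteDimensional_sup N₀ K'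
      haveI : FiniteDimensional ↥K' ↥(extendScalars (le_sup_right : K' ≤ N₀ ⊔ K')) :=
        aux_fd_ext _
      apply IntermediateField.LinearDisjoint.of_finrank_sup
      rw [extendScalars_sup]
      set k := finrank K ↥K' with hk
      have hk0 : 0 < k := finrank_pos
      apply Nat.eq_of_mul_eq_mul_left hk0
      have e1 := aux_finrank_ext (le_sup_of_le_right hF : K' ≤ (N₀ ⊔ K') ⊔ F)
      have e2 := aux_finrank_ext (le_sup_right : K' ≤ N₀ ⊔ K')
      have e3 := aux_finrank_ext hF
      have hMF : (N₀ ⊔ K') ⊔ F = N₀ ⊔ F := by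
        rw [sup_assoc, sup_eq_right.2 hF]
      rw [← hk] at e1 e2 e3
      have e2' : finrank ↥K' ↥(extendScalars (le_sup_right : K' ≤ N₀ ⊔ K')) = finrank K ↥N₀ := by
        have hsupK' : finrank K ↥(N₀ ⊔ K') = finrank K ↥N₀ * k := hdK'.finrank_sup
        apply Nat.eq_of_mul_eq_mul_left hk0
        rw [e2, hsupK', mul_comm]
      calc k * finrank ↥K' ↥(extendScalars (le_sup_of_le_left le_sup_right : K' ≤ (N₀ ⊔ K') ⊔ F))
          = finrank K ↥((N₀ ⊔ K') ⊔ F) := e1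
        _ = finrank K ↥N₀ * finrank K ↥F := by rw [hMF, hsup]
        _ = finrank K ↥N₀ * (k * finrank ↥K' ↥(extendScalars hF)) := by rw [e3]
        _ = k * (finrank ↥K' ↥(extendScalars (le_sup_right : K' ≤ N₀ ⊔ K')) *
              finrank ↥K' ↥(extendScalars hF)) := by rw [e2']; ring
end

section
/- Every Galois extension L/K with Galois group isomorphic (as a topological group) to the countable product ∏_{n=1}^∞ ℤ/2ℤ is a vast extension of K. -/
/-- An algebraic extension `L/K` (inside a fixed algebraic closure of the characteristic-zero
field `K`) is *vast* if `L ≠ K` and for every finite extension `F/K` there is an intermediate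
field `M` with `K ⊊ M ⊆ L` linearly disjoint from `F` over `K`. -/
def IsVast {K : Type*} [Field K] (L : IntermediateField K (AlgebraicClosure K)) : Prop :=
  L ≠ ⊥ ∧
    ∀ F : IntermediateField K (AlgebraicClosure K), FiniteDimensional K ↥F →
      ∃ M : IntermediateField K (AlgebraicClosure K), M ≤ L ∧ M ≠ ⊥ ∧ M.LinearDisjoint ↥F

/-- `ZMod 2` carries the discrete topology. -/
instance : TopologicalSpace (ZMod 2) := ⊥

/-! The coordinate projections of `∏ ℤ/2ℤ` have pairwise distinct open kernels of index 2, so by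
infinite Galois theory their fixed fields are infinitely many distinct quadratic Galois
subextensions of `L/K`. A finite separable `F/K` has only finitely many subfields, hence one of
these quadratic fields `M` is not contained in `F`. Since `[M : K]` is prime, `M ⊓ F = K`, and
as `M/K` is Galois this makes `M` and `F` linearly disjoint. -/

open IntermediateField Module

namespace IntermediateField

variable {F E : Type*} [Field F] [Field E] [Algebra F E]

theorem inf_eq_bot_of_finrank_prime {A B : IntermediateField F E} (hA : (finrank F A).Prime)
    (hAB : ¬ A ≤ B) : A ⊓ B = ⊥ := by
  have : FiniteDimensional F A := Module.finite_of_finrank_pos hA.pos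
  rcases (Nat.dvd_prime hA).mp (finrank_dvd_of_le_right (inf_le_left : A ⊓ B ≤ A)) with h | h
  · exact finrank_eq_one_iff.mp h
  · exact absurd (eq_of_le_of_finrank_eq inf_le_left h ▸ inf_le_right) hAB

theorem exists_not_le_of_injective [Algebra.IsSeparable F E] {N : ℕ → IntermediateField F E}
    (hN : Function.Injective N) (B : IntermediateField F E) [FiniteDimensional F B] :
    ∃ n, ¬ N n ≤ B := by
  by_contra! hNB
  have : Finite (IntermediateField F B) :=
    Field.finite_intermediateField_of_exists_primitive_element F B
      (Field.exists_primitive_element F B)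
  have : Finite ℕ := Finite.of_injective (fun n ↦ restrict (hNB n)) fun m n hmn ↦ hN <| by
    simpa only [lift_restrict] using congrArg lift hmn
  exact not_finite ℕ

end IntermediateField

namespace InfiniteGalois

variable {k K : Type*} [Field k] [Field K] [Algebra k K] [IsGalois k K]
  {H : Subgroup Gal(K/k)}

theorem fixingSubgroup_fixedField_of_isOpen (hH : IsOpen (H : Set Gal(K/k))) :
    (fixedField H).fixingSubgroup = H :=
  fixingSubgroup_fixedField ⟨H, H.isClosed_of_isOpen hH⟩

theorem finiteDimensional_fixedField_of_isOpen (hH : IsOpen (H : Set Gal(K/k))) :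
    FiniteDimensional k (fixedField H) :=
  (isOpen_iff_finite _).mp (by rwa [fixingSubgroup_fixedField_of_isOpen hH])

theorem isGalois_fixedField_of_isOpen [H.Normal] (hH : IsOpen (H : Set Gal(K/k))) :
    IsGalois k (fixedField H) :=
  (normal_iff_isGalois _).mp (by rwa [fixingSubgroup_fixedField_of_isOpen hH])

theorem finrank_fixedField_of_isOpen [H.Normal] (hH : IsOpen (H : Set Gal(K/k))) :
    finrank k (fixedField H) = H.index := by
  have := finiteDimensional_fixedField_of_isOpen hH
  have := isGalois_fixedField_of_isOpen hH
  let Hc : ClosedSubgroup Gal(K/k) := ⟨H, H.isClosed_of_isOpen hH⟩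
  have : Hc.Normal := ‹H.Normal›
  rw [← IsGalois.card_aut_eq_finrank, Subgroup.index]
  exact (Nat.card_congr (normalAutEquivQuotient Hc).toEquiv).symm

end InfiniteGalois

namespace Pi

variable {ι : Type*} {M : ι → Type*} [∀ i, Group (M i)]

theorem index_ker_evalMonoidHom (i : ι) : (evalMonoidHom M i).ker.index = Nat.card (M i) := by
  rw [Subgroup.index_ker, MonoidHom.range_eq_top.mpr (Function.surjective_eval i),
    Subgroup.card_top]

theorem isOpen_ker_evalMonoidHom [∀ i, TopologicalSpace (M i)] [∀ i, DiscreteTopology (M i)]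
    (i : ι) : IsOpen ((evalMonoidHom M i).ker : Set (∀ i, M i)) := by
  rw [MonoidHom.coe_ker]
  exact (isOpen_discrete {1}).preimage (continuous_apply i)

theorem injective_ker_evalMonoidHom [DecidableEq ι] [∀ i, Nontrivial (M i)] :
    Function.Injective fun i ↦ (evalMonoidHom M i).ker := by
  intro i j (hij : (evalMonoidHom M i).ker = (evalMonoidHom M j).ker)
  by_contra hne
  obtain ⟨a, ha⟩ := exists_ne (1 : M i)
  have hmem : mulSingle i a ∈ (evalMonoidHom M j).ker := mulSingle_eq_of_ne (Ne.symm hne) a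
  rw [← hij, MonoidHom.mem_ker, evalMonoidHom_apply, mulSingle_eq_same] at hmem
  exact ha hmem

end Pi

theorem MulEquiv.exists_injective_isOpen_index_eq_card {G ι : Type*} [Group G]
    [TopologicalSpace G] {M : ι → Type*} [∀ i, Group (M i)] [∀ i, TopologicalSpace (M i)]
    [∀ i, DiscreteTopology (M i)] [∀ i, Nontrivial (M i)] (e : G ≃* ∀ i, M i)
    (he : Continuous e) :
    ∃ H : ι → Subgroup G, Function.Injective H ∧
      ∀ i, IsOpen (H i : Set G) ∧ (H i).index = Nat.card (M i) := by
  classical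
  refine ⟨fun i ↦ (Pi.evalMonoidHom M i).ker.comap e.toMonoidHom,
    (Subgroup.comap_injective (f := e.toMonoidHom) e.surjective).comp
      Pi.injective_ker_evalMonoidHom, fun i ↦ ⟨(Pi.isOpen_ker_evalMonoidHom i).preimage he, ?_⟩⟩
  rw [Subgroup.index_comap_of_surjective _ e.surjective, Pi.index_ker_evalMonoidHom]

theorem isVast_of_injective_of_finrank_eq_two {K : Type*} [Field K] [PerfectField K]
    (L : IntermediateField K (AlgebraicClosure K)) {N : ℕ → IntermediateField K L}
    (hN : Function.Injective N) [∀ n, IsGalois K (N n)] (hN_finrank : ∀ n, finrank K (N n) = 2) :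
    IsVast L := by
  have hlift_finrank (n : ℕ) : finrank K (lift (N n)) = 2 :=
    (liftAlgEquiv _).toLinearEquiv.finrank_eq.symm.trans (hN_finrank n)
  have (n : ℕ) : IsGalois K (lift (N n)) := IsGalois.of_algEquiv (liftAlgEquiv _)
  have (n : ℕ) : FiniteDimensional K (lift (N n)) :=
    Module.finite_of_finrank_pos (by rw [hlift_finrank n]; decide)
  have hlift_ne_bot (n : ℕ) : lift (N n) ≠ ⊥ := fun h ↦
    absurd (finrank_eq_one_iff.mpr h) (by rw [hlift_finrank n]; decide)
  refine ⟨ne_bot_of_le_ne_bot (hlift_ne_bot 0) (lift_le _), fun F hF ↦ ?_⟩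
  obtain ⟨n, hn⟩ := exists_not_le_of_injective ((lift_injective L).comp hN) F
  refine ⟨lift (N n), lift_le _, hlift_ne_bot n, LinearDisjoint.of_inf_eq_bot ?_⟩
  exact inf_eq_bot_of_finrank_prime (hlift_finrank n ▸ Nat.prime_two) hn

theorem vast_of_galoisGroup_prod_zmod_two_general {K : Type*} [Field K] [CharZero K]
    (L : IntermediateField K (AlgebraicClosure K)) [IsGalois K ↥L]
    (e : (↥L ≃ₐ[K] ↥L) ≃* (ℕ → Multiplicative (ZMod 2)))
    (he : Continuous e) :
    IsVast L := by
  have : DiscreteTopology (Multiplicative (ZMod 2)) := ⟨rfl⟩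
  obtain ⟨H, hH_inj, hH⟩ := e.exists_injective_isOpen_index_eq_card he
  have hH_index (n : ℕ) : (H n).index = 2 := by simp [(hH n).2]
  have (n : ℕ) : (H n).Normal := Subgroup.normal_of_index_eq_two (hH_index n)
  have (n : ℕ) : IsGalois K (fixedField (H n)) :=
    InfiniteGalois.isGalois_fixedField_of_isOpen (hH n).1
  refine isVast_of_injective_of_finrank_eq_two L (N := fun n ↦ fixedField (H n)) ?_
    fun n ↦ (InfiniteGalois.finrank_fixedField_of_isOpen (hH n).1).trans (hH_index n)
  intro m n hmn
  apply hH_inj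
  rw [← InfiniteGalois.fixingSubgroup_fixedField_of_isOpen (hH m).1,
    ← InfiniteGalois.fixingSubgroup_fixedField_of_isOpen (hH n).1]
  exact congrArg fixingSubgroup hmn

/-- Every Galois extension `L/K` whose Galois group (with the Krull topology) is isomorphic,
as a topological group, to the countable product `∏_{n=1}^∞ ℤ/2ℤ` (with the product topology)
is a vast extension of `K`. -/
theorem vast_of_galoisGroup_prod_zmod_two {K : Type*} [Field K] [CharZero K]
    (L : IntermediateField K (AlgebraicClosure K)) [IsGalois K ↥L]
    (e : (↥L ≃ₐ[K] ↥L) ≃* (ℕ → Multiplicative (ZMod 2)))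
    (he : Continuous e) (he' : Continuous e.symm) :
    IsVast L :=
  vast_of_galoisGroup_prod_zmod_two_general L e he
end

section
/- For every d ≥ 2, the automorphism group of the infinite complete rooted d-ary tree admits a surjective group homomorphism onto ∏_{n=1}^∞ ℤ/2ℤ, given by the collection of sign homomorphisms of the actions on the levels of the tree. -/
/-- Adjacency in the complete rooted `d`-ary tree with vertex set the words over `Fin d`:
a word of positive length is adjacent to its truncation (dropping the last letter). -/
def TreeAdj {d : ℕ} (v w : List (Fin d)) : Prop :=
  (v = w.dropLast ∧ w ≠ []) ∨ (w = v.dropLast ∧ v ≠ [])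

/-- The automorphism group of the infinite complete rooted `d`-ary tree `T_∞(d)`:
permutations of the vertex set `List (Fin d)` fixing the root `[]` and
preserving adjacency. -/
def treeAutInf (d : ℕ) : Subgroup (Equiv.Perm (List (Fin d))) where
  carrier := {π | π [] = [] ∧ ∀ v w, TreeAdj v w ↔ TreeAdj (π v) (π w)}
  one_mem' := ⟨rfl, fun _ _ => Iff.rfl⟩
  mul_mem' := by
    rintro a b ⟨ha1, ha2⟩ ⟨hb1, hb2⟩
    exact ⟨by simp [Equiv.Perm.mul_apply, hb1, ha1],
      fun v w => (hb2 v w).trans (ha2 _ _)⟩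
  inv_mem' := by
    rintro a ⟨h1, h2⟩
    refine ⟨?_, fun v w => ?_⟩
    · conv_lhs => rw [← h1]
      exact a.symm_apply_apply []
    · simpa using (h2 (a⁻¹ v) (a⁻¹ w)).symm

/-- The vertex set of the complete rooted `d`-ary tree of depth `k`:
words over `Fin d` of length at most `k`. -/
def TreeVtx (d k : ℕ) : Type := {l : List (Fin d) // l.length ≤ k}

/-- The automorphism group of the complete rooted `d`-ary tree `T_k(d)` of depth `k`:
permutations of the vertex set fixing the root `[]` and preserving adjacency. -/
def treeAutFin (d k : ℕ) : Subgroup (Equiv.Perm (TreeVtx d k)) where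
  carrier := {π | π ⟨[], Nat.zero_le k⟩ = ⟨[], Nat.zero_le k⟩ ∧
    ∀ v w, TreeAdj v.1 w.1 ↔ TreeAdj (π v).1 (π w).1}
  one_mem' := ⟨rfl, fun v w => by rw [Equiv.Perm.one_apply, Equiv.Perm.one_apply]⟩
  mul_mem' := by
    rintro a b ⟨ha1, ha2⟩ ⟨hb1, hb2⟩
    exact ⟨by show a (b _) = _; rw [hb1, ha1],
      fun v w => (hb2 v w).trans (ha2 _ _)⟩
  inv_mem' := by
    rintro a ⟨h1, h2⟩
    refine ⟨?_, fun v w => ?_⟩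
    · conv_lhs => rw [← h1]
      exact a.symm_apply_apply _
    · simpa using (h2 (a⁻¹ v) (a⁻¹ w)).symm

instance levelFintype (d n : ℕ) : Fintype {l : List (Fin d) // l.length = n} :=
  Fintype.ofEquiv (List.Vector (Fin d) n) (Equiv.refl _)

/-!
Any labelling `a` of the vertices by permutations of the alphabet (a portrait) defines an
automorphism, which permutes the letter following the prefix `v` by `a v`. Its sign `σ_{n+1}`
depends only on the labels at levels `≤ n`, and multiplying the label at a single vertex `v` of
level `n` by a transposition `(x y)` composes the action on level `n + 1` with the transposition
of `v x` and `v y`, flipping `σ_{n+1}`. Choosing the labels one level at a time therefore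
realises any prescribed sequence of signs.
-/

open Function Equiv

theorem surjective_of_triangular {α β : Type*} [Nonempty α] {F : (ℕ → α) → ℕ → β}
    (hF : ∀ s t n, (∀ k ≤ n, s k = t k) → F s n = F t n)
    (hflip : ∀ s n b, ∃ c, F (update s n c) n = b) : Surjective F := by
  intro b
  choose c hc using hflip
  -- `u m` has its first `m` coordinates chosen to fit `b`; they never change afterwards.
  let u : ℕ → ℕ → α := fun m =>
    Nat.rec (fun _ => Classical.arbitrary α) (fun n s => update s n (c s n (b n))) m
  have hu : ∀ m k, k < m → u m k = u (k + 1) k := by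
    intro m k hk
    induction m with
    | zero => omega
    | succ m ih =>
      rcases Nat.lt_succ_iff_lt_or_eq.mp hk with hlt | rfl
      · rw [← ih hlt]
        exact update_of_ne (by omega) _ _
      · rfl
  refine ⟨fun k => u (k + 1) k, funext fun n => ?_⟩
  rw [hF _ (u (n + 1)) n fun k hk => (hu (n + 1) k (by omega)).symm]
  exact hc (u n) n (b n)

section Portrait

variable {α : Type*}

def portrait (a : List α → Perm α) : List α → List α
  | [] => []
  | x :: xs => a [] x :: portrait (fun v => a (x :: v)) xs

@[simp]
theorem portrait_nil (a : List α → Perm α) : portrait a [] = [] := rfl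

@[simp]
theorem portrait_cons (a : List α → Perm α) (x : α) (xs : List α) :
    portrait a (x :: xs) = a [] x :: portrait (fun v => a (x :: v)) xs := rfl

theorem portrait_injective (a : List α → Perm α) : Injective (portrait a) := by
  intro l₁ l₂ h
  induction l₁ generalizing a l₂ with
  | nil => cases l₂ <;> simp_all
  | cons x xs ih =>
    cases l₂ with
    | nil => simp at h
    | cons y ys =>
      obtain ⟨hxy, hrest⟩ := List.cons_eq_cons.mp h
      obtain rfl := (a []).injective hxy
      rw [ih _ hrest]

theorem portrait_surjective (a : List α → Perm α) : Surjective (portrait a) := by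
  intro l
  induction l generalizing a with
  | nil => exact ⟨[], rfl⟩
  | cons y ys ih =>
    obtain ⟨xs, hxs⟩ := ih fun v => a ((a []).symm y :: v)
    exact ⟨(a []).symm y :: xs, by simp [hxs]⟩

theorem portrait_append_singleton (a : List α → Perm α) (l : List α) (x : α) :
    portrait a (l ++ [x]) = portrait a l ++ [a l x] := by
  induction l generalizing a with
  | nil => rfl
  | cons y ys ih => simp [ih]

theorem portrait_dropLast (a : List α → Perm α) (l : List α) :
    portrait a l.dropLast = (portrait a l).dropLast := by
  induction l using List.reverseRecOn with
  | nil => rfl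
  | append_singleton l x _ => simp [portrait_append_singleton]

theorem portrait_congr {a b : List α → Perm α} {l : List α}
    (h : ∀ v : List α, v.length < l.length → a v = b v) : portrait a l = portrait b l := by
  induction l generalizing a b with
  | nil => rfl
  | cons x xs ih =>
    simp only [portrait_cons, h [] (by simp)]
    rw [ih fun v hv => h (x :: v) (by simpa using hv)]

noncomputable def portraitPerm (a : List α → Perm α) : Perm (List α) :=
  Equiv.ofBijective (portrait a) ⟨portrait_injective a, portrait_surjective a⟩

end Portrait

variable {d : ℕ}

theorem TreeAdj.length_eq {v w : List (Fin d)} (h : TreeAdj v w) :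
    w.length = v.length + 1 ∨ v.length = w.length + 1 := by
  rcases h with ⟨rfl, hw⟩ | ⟨rfl, hv⟩
  · exact Or.inl (by simp [List.length_dropLast, Nat.sub_add_cancel (List.length_pos_iff.mpr hw)])
  · exact Or.inr (by simp [List.length_dropLast, Nat.sub_add_cancel (List.length_pos_iff.mpr hv)])

theorem length_apply_le_of_mem_treeAutInf {g : Perm (List (Fin d))} (hg : g ∈ treeAutInf d)
    (l : List (Fin d)) : (g l).length ≤ l.length := by
  induction l using List.reverseRecOn with
  | nil => simp [hg.1]
  | append_singleton l x ih =>
    have hadj : TreeAdj l (l ++ [x]) := Or.inl ⟨List.dropLast_concat.symm, by simp⟩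
    have := ((hg.2 _ _).mp hadj).length_eq
    simp only [List.length_append, List.length_singleton]
    omega

theorem length_apply_of_mem_treeAutInf {g : Perm (List (Fin d))} (hg : g ∈ treeAutInf d)
    (l : List (Fin d)) : (g l).length = l.length := by
  refine le_antisymm (length_apply_le_of_mem_treeAutInf hg l) ?_
  simpa using length_apply_le_of_mem_treeAutInf ((treeAutInf d).inv_mem hg) (g l)

theorem mem_treeAutInf_of_dropLast (π : Perm (List (Fin d))) (h₀ : π [] = [])
    (h : ∀ l, π l.dropLast = (π l).dropLast) : π ∈ treeAutInf d := by
  have hparent : ∀ v w, π v = (π w).dropLast ↔ v = w.dropLast := fun v w =>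
    π.injective.eq_iff' (h w)
  have hne : ∀ w, π w ≠ [] ↔ w ≠ [] := fun w => π.injective.ne_iff' h₀
  exact ⟨h₀, fun v w => by simp only [TreeAdj, hparent, hne]⟩

noncomputable def portraitAut (a : List (Fin d) → Perm (Fin d)) : treeAutInf d :=
  ⟨portraitPerm a, mem_treeAutInf_of_dropLast _ rfl (portrait_dropLast a)⟩

theorem coe_portraitAut_apply (a : List (Fin d) → Perm (Fin d)) (l : List (Fin d)) :
    (portraitAut a : Perm (List (Fin d))) l = portrait a l := rfl

variable (d) in
def levelPerm (n : ℕ) : treeAutInf d →* Perm {l : List (Fin d) // l.length = n} where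
  toFun g := (g : Perm (List (Fin d))).subtypePerm
    (fun l => by simp only [length_apply_of_mem_treeAutInf g.2 l])
  map_one' := rfl
  map_mul' _ _ := rfl

@[simp]
theorem coe_levelPerm_apply (n : ℕ) (g : treeAutInf d) (w : {l : List (Fin d) // l.length = n}) :
    (levelPerm d n g w : List (Fin d)) = (g : Perm (List (Fin d))) w := rfl

def signBit : ℤˣ →* Multiplicative (ZMod 2) where
  toFun u := Multiplicative.ofAdd (if u = 1 then 0 else 1)
  map_one' := rfl
  map_mul' a b := by
    rcases Int.units_eq_one_or a with rfl | rfl <;>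
      rcases Int.units_eq_one_or b with rfl | rfl <;> decide

variable (d) in
/-- Coordinate `n` is the sign on level `n + 1`, so the root level is skipped. -/
def levelSign : treeAutInf d →* (ℕ → Multiplicative (ZMod 2)) :=
  MonoidHom.pi fun n => signBit.comp (Perm.sign.comp (levelPerm d (n + 1)))

theorem levelSign_apply (g : treeAutInf d) (n : ℕ) :
    levelSign d g n = signBit (Perm.sign (levelPerm d (n + 1) g)) := rfl

theorem levelSign_portraitAut_congr {a b : List (Fin d) → Perm (Fin d)} {n : ℕ}
    (h : ∀ v : List (Fin d), v.length ≤ n → a v = b v) :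
    levelSign d (portraitAut a) n = levelSign d (portraitAut b) n := by
  have hlevel : levelPerm d (n + 1) (portraitAut a) = levelPerm d (n + 1) (portraitAut b) := by
    refine Equiv.ext fun w => Subtype.ext <| portrait_congr fun v hv => h v ?_
    have := w.2
    omega
  rw [levelSign_apply, levelSign_apply, hlevel]

theorem levelSign_portraitAut_of_mul_swap {a b : List (Fin d) → Perm (Fin d)} {v : List (Fin d)}
    {x y : Fin d} (hxy : x ≠ y) (hv : b v = a v * swap x y) (hb : ∀ u ≠ v, b u = a u) :
    levelSign d (portraitAut b) v.length =
      Multiplicative.ofAdd 1 * levelSign d (portraitAut a) v.length := by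
  let child : Fin d → {l : List (Fin d) // l.length = v.length + 1} :=
    fun z => ⟨v ++ [z], by simp⟩
  have hchild : Injective child := fun z z' h => by simpa [child] using h
  have hlevel : levelPerm d (v.length + 1) (portraitAut b) =
      levelPerm d (v.length + 1) (portraitAut a) * swap (child x) (child y) := by
    refine Equiv.ext fun ⟨w, hw⟩ => Subtype.ext ?_
    obtain ⟨u, z, rfl⟩ : ∃ u z, w = u ++ [z] := by
      rcases List.eq_nil_or_concat w with rfl | h
      · simp at hw
      · simpa using h
    have hu : u.length = v.length := by simpa using hw
    have hpre : portrait b u = portrait a u :=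
      portrait_congr fun u' hu' => hb u' (by rintro rfl; omega)
    by_cases huv : u = v
    · subst huv
      rw [Perm.mul_apply, hchild.swap_apply]
      simp [child, coe_portraitAut_apply, portrait_append_singleton, hpre, hv]
    · have hfix : swap (child x) (child y) ⟨u ++ [z], hw⟩ = ⟨u ++ [z], hw⟩ :=
        swap_apply_of_ne_of_ne (by simp [child, huv]) (by simp [child, huv])
      rw [Perm.mul_apply, hfix]
      simp [coe_portraitAut_apply, portrait_append_singleton, hpre, hb u huv]
  have hneg : signBit (-1) = Multiplicative.ofAdd 1 := by decide
  rw [levelSign_apply, levelSign_apply, hlevel, map_mul, Perm.sign_swap (hchild.ne hxy),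
    map_mul, hneg, mul_comm]

theorem levelSign_surjective (hd : 2 ≤ d) : Surjective (levelSign d) := by
  let x : Fin d := ⟨0, by omega⟩
  let y : Fin d := ⟨1, by omega⟩
  have hxy : x ≠ y := by simp [x, y, Fin.ext_iff]
  have two_values : ∀ p q : Multiplicative (ZMod 2), q = p ∨ q = Multiplicative.ofAdd 1 * p := by
    decide
  refine Surjective.of_comp (g := fun s : ℕ → List (Fin d) → Perm (Fin d) =>
    portraitAut fun v => s v.length v) (surjective_of_triangular ?_ ?_)
  · intro s t n h
    exact levelSign_portraitAut_congr fun v hv => by rw [h _ hv]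
  · intro s n q
    let v := List.replicate n x
    let c := update (s n) v (s n v * swap x y)
    have hflip := levelSign_portraitAut_of_mul_swap (v := v) (a := fun v => s v.length v)
      (b := fun v => update s n c v.length v) hxy (by simp [v, c]) (fun u hu => by
        by_cases hn : u.length = n
        · subst hn
          simp [c, hu]
        · simp [hn])
    rw [List.length_replicate] at hflip
    rcases two_values (levelSign d (portraitAut fun v => s v.length v) n) q with rfl | rfl
    · exact ⟨s n, by simp⟩
    · exact ⟨c, hflip⟩

/-- For every `d ≥ 2`, the automorphism group of the infinite complete rooted `d`-ary tree
admits a surjective group homomorphism onto `∏_{n=1}^∞ ℤ/2ℤ`, given by the collection of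
sign homomorphisms of the actions on the levels of the tree.  (Automorphisms preserve the
levels; the `n`-th coordinate, for `n ≥ 1`, is the sign of the induced permutation of the
words of length `n`, written additively in `ℤ/2ℤ`.) -/
theorem treeAutInf_surjects_onto_prod_zmod_two (d : ℕ) (hd : 2 ≤ d) :
    ∃ hlen : ∀ (g : treeAutInf d) (l : List (Fin d)),
        ((g : Equiv.Perm (List (Fin d))) l).length = l.length,
      ∃ σ : ↥(treeAutInf d) →* (ℕ → Multiplicative (ZMod 2)),
        Function.Surjective σ ∧
        ∀ (g : treeAutInf d) (n : ℕ),
          σ g n = Multiplicative.ofAdd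
            (if Equiv.Perm.sign
                ((g : Equiv.Perm (List (Fin d))).subtypePerm
                  (p := fun l => l.length = n + 1) (fun l => by simp only [hlen g l])) = 1
             then (0 : ZMod 2) else 1) :=
  ⟨fun g => length_apply_of_mem_treeAutInf g.2, levelSign d, levelSign_surjective hd,
    fun _ _ => rfl⟩
end

section
/- Let L/K be a Galois extension with Galois group G, let K'/K be a finite extension linearly disjoint from L over K (inside a common algebraic closure), and let L' = LK'. Then the map sending an intermediate field M of L/K to MK' is an inclusion-preserving bijection between intermediate fields of L/K and intermediate fields of L'/K', with inverse M' ↦ M' ∩ L. -/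
/-!
Work in the Galois group `G` of `Ω/K`, writing `G_E` for the fixing subgroup of `E`. Because `L/K`
is Galois, `G_L` is normal, so `G_E ⊔ G_L = G_E G_L` is compact, hence closed, hence equal to
`G_{E ∩ L}`. Since `E ↦ G_E` is injective and reverses inclusions, the identities
`(M K') ∩ L = M` and `(M' ∩ L) K' = M'` become Dedekind's modular law for subgroups, the first one
fed with `G_{K'} G_L = G_{L ∩ K'} = G`.
-/

open IntermediateField
open scoped Pointwise

theorem Subgroup.sup_inf_assoc_of_coe_sup_eq_mul {G : Type*} [Group G] {X Y Z : Subgroup G}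
    (hXY : ((X ⊔ Y : Subgroup G) : Set G) = X * Y) (h : X ≤ Z) :
    (X ⊔ Y) ⊓ Z = X ⊔ Y ⊓ Z := by
  refine le_antisymm ?_ (le_inf (sup_le_sup_left inf_le_left _) (sup_le h inf_le_right))
  rintro g ⟨hg, hgZ⟩
  obtain ⟨x, hx, y, hy, rfl⟩ : g ∈ (X : Set G) * Y := hXY ▸ hg
  have hyZ : y ∈ Z := by simpa using Z.mul_mem (Z.inv_mem (h hx)) hgZ
  exact mul_mem_sup hx ⟨hy, hyZ⟩

theorem IntermediateField.fixedField_sup {k K : Type*} [Field k] [Field K] [Algebra k K]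
    (H₁ H₂ : Subgroup Gal(K/k)) :
    fixedField (H₁ ⊔ H₂) = fixedField H₁ ⊓ fixedField H₂ :=
  le_antisymm (le_inf (fixedField_le le_sup_left) (fixedField_le le_sup_right)) <|
    (le_iff_le _ _).2 <| sup_le ((le_iff_le _ _).1 inf_le_left) ((le_iff_le _ _).1 inf_le_right)

namespace InfiniteGalois

variable {k K : Type*} [Field k] [Field K] [Algebra k K]

theorem fixingSubgroup_injective [IsGalois k K] :
    Function.Injective (fixingSubgroup : IntermediateField k K → Subgroup Gal(K/k)) :=
  fun E F h ↦ by rw [← fixedField_fixingSubgroup E, h, fixedField_fixingSubgroup]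

/-- As `F.fixingSubgroup` is normal, the join is the set product of two compact sets, hence closed,
so by the infinite Galois correspondence it is the fixing subgroup of its fixed field. -/
theorem fixingSubgroup_inf [IsGalois k K] (E F : IntermediateField k K) [IsGalois k F] :
    (E ⊓ F).fixingSubgroup = E.fixingSubgroup ⊔ F.fixingSubgroup := by
  have hclosed :
      IsClosed ((E.fixingSubgroup ⊔ F.fixingSubgroup : Subgroup Gal(K/k)) : Set Gal(K/k)) := by
    rw [Subgroup.mul_normal]
    exact ((fixingSubgroup_isClosed E).isCompact.mul (fixingSubgroup_isClosed F).isCompact).isClosed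
  calc (E ⊓ F).fixingSubgroup
      = (fixedField (E.fixingSubgroup ⊔ F.fixingSubgroup)).fixingSubgroup := by
        rw [fixedField_sup, fixedField_fixingSubgroup, fixedField_fixingSubgroup]
    _ = E.fixingSubgroup ⊔ F.fixingSubgroup := fixingSubgroup_fixedField ⟨_, hclosed⟩

end InfiniteGalois

namespace IntermediateField

open InfiniteGalois

variable {K Ω : Type*} [Field K] [Field Ω] [Algebra K Ω] [IsGalois K Ω]
  {L K' : IntermediateField K Ω} [IsGalois K L]

theorem sup_inf_eq_of_le_of_inf_eq_bot (hLK' : L ⊓ K' = ⊥) {M : IntermediateField K Ω}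
    (hM : M ≤ L) : (M ⊔ K') ⊓ L = M := by
  apply fixingSubgroup_injective
  calc ((M ⊔ K') ⊓ L).fixingSubgroup
      = L.fixingSubgroup ⊔ K'.fixingSubgroup ⊓ M.fixingSubgroup := by
        rw [fixingSubgroup_inf, fixingSubgroup_sup, sup_comm, inf_comm]
    _ = (L.fixingSubgroup ⊔ K'.fixingSubgroup) ⊓ M.fixingSubgroup :=
        (Subgroup.sup_inf_assoc_of_coe_sup_eq_mul (Subgroup.normal_mul _ _)
          (fixingSubgroup_antitone hM)).symm
    _ = M.fixingSubgroup := by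
        rw [sup_comm, ← fixingSubgroup_inf, inf_comm K', hLK', fixingSubgroup_bot, top_inf_eq]

theorem inf_sup_eq_of_le_sup {M' : IntermediateField K Ω} (hK'M' : K' ≤ M')
    (hM'LK' : M' ≤ L ⊔ K') : (M' ⊓ L) ⊔ K' = M' := by
  apply fixingSubgroup_injective
  rw [fixingSubgroup_sup, fixingSubgroup_inf,
    Subgroup.sup_inf_assoc_of_coe_sup_eq_mul (Subgroup.mul_normal _ _)
      (fixingSubgroup_antitone hK'M'),
    ← fixingSubgroup_sup, sup_eq_left.2 (fixingSubgroup_antitone hM'LK')]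

variable (L K') in
def baseChangeOrderIso (hLK' : L ⊓ K' = ⊥) :
    {M : IntermediateField K Ω // M ≤ L} ≃o
      {M' : IntermediateField K Ω // K' ≤ M' ∧ M' ≤ L ⊔ K'} :=
  Equiv.toOrderIso
    { toFun M := ⟨M.1 ⊔ K', le_sup_right, sup_le_sup_right M.2 _⟩
      invFun M' := ⟨M'.1 ⊓ L, inf_le_right⟩
      left_inv M := Subtype.ext (sup_inf_eq_of_le_of_inf_eq_bot hLK' M.2)
      right_inv M' := Subtype.ext (inf_sup_eq_of_le_sup M'.2.1 M'.2.2) }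
    (fun M N h ↦ sup_le_sup_right (show M.1 ≤ N.1 from h) K')
    (fun M' N' h ↦ inf_le_inf_right L (show M'.1 ≤ N'.1 from h))

end IntermediateField

theorem galois_base_change_correspondence_general {K : Type*} [Field K] [CharZero K]
    (L K' : IntermediateField K (AlgebraicClosure K)) [IsGalois K ↥L]
    (hdisj : L ⊓ IntermediateField.normalClosure K ↥K' (AlgebraicClosure K) = ⊥) :
    ∃ e : {M : IntermediateField K (AlgebraicClosure K) // M ≤ L} ≃
        {M' : IntermediateField K (AlgebraicClosure K) // K' ≤ M' ∧ M' ≤ L ⊔ K'},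
      (∀ M, (e M : IntermediateField K (AlgebraicClosure K)) = M.1 ⊔ K') ∧
      (∀ M', (e.symm M' : IntermediateField K (AlgebraicClosure K)) = M'.1 ⊓ L) ∧
      (∀ M N, M.1 ≤ N.1 ↔ (e M).1 ≤ (e N).1) := by
  have hLK' : L ⊓ K' = ⊥ := eq_bot_iff.2 (hdisj ▸ inf_le_inf_left L K'.le_normalClosure)
  exact ⟨(baseChangeOrderIso L K' hLK').toEquiv, fun _ ↦ rfl, fun _ ↦ by rfl,
    fun _ _ ↦ (baseChangeOrderIso L K' hLK').le_iff_le.symm⟩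

/-- Let `L/K` be a Galois extension and `K'/K` a finite extension linearly disjoint from `L`
over `K` (inside a fixed algebraic closure; i.e. `L ∩ K'' = K` for the Galois closure `K''`
of `K'`), and let `L' = LK'`.  Then `M ↦ MK'` is an inclusion-preserving bijection between
intermediate fields of `L/K` and intermediate fields of `L'/K'`, with inverse
`M' ↦ M' ∩ L`. -/
theorem galois_base_change_correspondence {K : Type*} [Field K] [CharZero K]
    (L K' : IntermediateField K (AlgebraicClosure K)) [IsGalois K ↥L]
    (hfin : FiniteDimensional K ↥K')
    (hdisj : L ⊓ IntermediateField.normalClosure K ↥K' (AlgebraicClosure K) = ⊥) :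
    ∃ e : {M : IntermediateField K (AlgebraicClosure K) // M ≤ L} ≃
        {M' : IntermediateField K (AlgebraicClosure K) // K' ≤ M' ∧ M' ≤ L ⊔ K'},
      (∀ M, (e M : IntermediateField K (AlgebraicClosure K)) = M.1 ⊔ K') ∧
      (∀ M', (e.symm M' : IntermediateField K (AlgebraicClosure K)) = M'.1 ⊓ L) ∧
      (∀ M N, M.1 ≤ N.1 ↔ (e M).1 ≤ (e N).1) :=
  galois_base_change_correspondence_general L K' hdisj
end
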